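/- Let H be a Hermitian operator on a finite-dimensional complex Hilbert space with smallest eigenvalue λ₀, one-dimensional ground eigenspace spanned by the unit vector |Ψ₀⟩, and spectral gap ε' > 0 (every other eigenvalue is at least λ₀ + ε'). Let 0 < η ≤ 1, set q = 4 log₂(1/η) + 24, and let ε₀ be a real number with |ε₀ − λ₀| ≤ ε'/√q. Define A = exp(−q(H − ε₀)²/(2ε'²)). If |Φ'⟩ is a unit vector with |⟨Ψ₀|Φ'⟩| ≥ 19/20, then the normalized vector |φ⟩ = A|Φ'⟩/‖A|Φ'⟩‖ satisfies ⟨φ|H|φ⟩ ≤ λ₀ + η ε'/100. -/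

import Mathlib

/-- The standard Hermitian inner product on `ι → ℂ`. -/
noncomputable def cinner {ι : Type*} [Fintype ι] (x y : ι → ℂ) : ℂ :=
  ∑ i, (starRingEnd ℂ) (x i) * y i

/-- The Euclidean norm on `ι → ℂ`. -/
noncomputable def evnorm {ι : Type*} [Fintype ι] (v : ι → ℂ) : ℝ :=
  Real.sqrt (cinner v v).re

/-! Expand everything in an orthonormal eigenbasis `eᵢ` of `H`. The filter multiplies the
`i`-th coordinate by `exp(-q(μᵢ-ε₀)²/(2ε'²))`, so the energy of `φ` is the average of the
eigenvalues `μᵢ` with weights `g(μᵢ)‖⟨eᵢ,Φ'⟩‖²`, where `g(μ) = exp(-q(μ-ε₀)²/ε'²)`.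
Eigenvectors overlapping `Ψ₀` have eigenvalue `λ₀` and, by Cauchy–Schwarz, carry at least
`(19/20)²` of the weight of `Φ'`; by the gap every other eigenvalue is at least `λ₀ + ε'`, where
the Gaussian has decayed enough that `g(μ)(μ-λ₀) ≤ (19/20)² (ηε'/100) g(λ₀)`. -/

open scoped Matrix ComplexConjugate InnerProductSpace

section cinner

variable {ι κ : Type*} [Fintype ι]

theorem cinner_eq_inner (x y : ι → ℂ) :
    cinner x y = ⟪WithLp.toLp 2 x, WithLp.toLp 2 y⟫_ℂ := by
  simp [cinner, PiLp.inner_apply, mul_comm]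

theorem evnorm_eq_norm (x : ι → ℂ) : evnorm x = ‖WithLp.toLp 2 x‖ := by
  rw [evnorm, cinner_eq_inner, @norm_eq_sqrt_re_inner ℂ]
  rfl

theorem conj_cinner (x y : ι → ℂ) : conj (cinner x y) = cinner y x := by
  rw [cinner_eq_inner, cinner_eq_inner, inner_conj_symm]

theorem cinner_smul_left (c : ℂ) (x y : ι → ℂ) : cinner (c • x) y = conj c * cinner x y := by
  simp [cinner_eq_inner, mul_comm]

theorem cinner_smul_right (c : ℂ) (x y : ι → ℂ) : cinner x (c • y) = c * cinner x y := by
  simp [cinner_eq_inner]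

theorem cinner_mulVec_right (M : Matrix ι ι ℂ) (x y : ι → ℂ) :
    cinner x (M *ᵥ y) = cinner (Mᴴ *ᵥ x) y := by
  simp only [cinner_eq_inner, EuclideanSpace.inner_eq_star_dotProduct, Matrix.star_mulVec,
    Matrix.conjTranspose_conjTranspose]
  rw [dotProduct_comm, Matrix.dotProduct_mulVec, dotProduct_comm]

theorem cinner_eq_sum_orthonormalBasis [Fintype κ] (b : OrthonormalBasis κ ℂ (EuclideanSpace ℂ ι))
    (x y : ι → ℂ) : cinner x y = ∑ i, conj (cinner (b i) x) * cinner (b i) y := by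
  simp only [cinner_eq_inner, WithLp.toLp_ofLp, inner_conj_symm, b.sum_inner_mul_inner]

theorem cinner_self_eq_sum_orthonormalBasis [Fintype κ]
    (b : OrthonormalBasis κ ℂ (EuclideanSpace ℂ ι)) (x : ι → ℂ) :
    cinner x x = ∑ i, (‖cinner (b i) x‖ ^ 2 : ℝ) := by
  simp [cinner_eq_sum_orthonormalBasis b x x, RCLike.conj_mul]

theorem re_cinner_inv_evnorm_smul (H : Matrix ι ι ℂ) (u : ι → ℂ) :
    (cinner ((evnorm u)⁻¹ • u) (H *ᵥ ((evnorm u)⁻¹ • u))).re =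
      (cinner u (H *ᵥ u)).re / (cinner u u).re := by
  have hnorm : (cinner u u).re = evnorm u ^ 2 := by
    rw [evnorm_eq_norm, ← inner_self_eq_norm_sq (𝕜 := ℂ), cinner_eq_inner]
    rfl
  rw [← Complex.coe_smul, Matrix.mulVec_smul, cinner_smul_left, cinner_smul_right,
    Complex.conj_ofReal, ← mul_assoc, ← Complex.ofReal_mul, Complex.re_ofReal_mul, hnorm]
  field_simp

end cinner

namespace Matrix

variable {n : Type*} [Fintype n]

theorem IsHermitian.cinner_mulVec_of_mulVec_eq_smul {H : Matrix n n ℂ} (hH : H.IsHermitian)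
    {e : n → ℂ} {r : ℝ} (he : H *ᵥ e = (r : ℂ) • e) (v : n → ℂ) :
    cinner e (H *ᵥ v) = r * cinner e v := by
  rw [cinner_mulVec_right, hH.eq, he, cinner_smul_left, Complex.conj_ofReal]

variable [DecidableEq n]

theorem pow_mulVec_of_mulVec_eq_smul {M : Matrix n n ℂ} {v : n → ℂ} {c : ℂ}
    (h : M *ᵥ v = c • v) (k : ℕ) : (M ^ k) *ᵥ v = c ^ k • v := by
  induction k with
  | zero => simp
  | succ k ih => rw [pow_succ', ← mulVec_mulVec, ih, mulVec_smul, h, smul_smul, pow_succ]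

theorem exp_mulVec_of_mulVec_eq_smul {M : Matrix n n ℂ} {v : n → ℂ} {c : ℂ}
    (h : M *ᵥ v = c • v) : NormedSpace.exp M *ᵥ v = Complex.exp c • v := by
  let _ : NormedRing (Matrix n n ℂ) := Matrix.linftyOpNormedRing
  let _ : NormedAlgebra ℂ (Matrix n n ℂ) := Matrix.linftyOpNormedAlgebra
  have hM := (NormedSpace.exp_series_hasSum_exp' (𝕂 := ℂ) M).map
    (mulVec.addMonoidHomLeft v) (continuous_id.matrix_mulVec continuous_const)
  refine hM.unique ?_
  rw [Complex.exp_eq_exp_ℂ]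
  convert (NormedSpace.exp_series_hasSum_exp' (𝕂 := ℂ) c).smul_const v using 2 with k
  simp [mulVec.addMonoidHomLeft, smul_mulVec, pow_mulVec_of_mulVec_eq_smul h, smul_smul]

namespace IsHermitian

variable {H : Matrix n n ℂ}

theorem mulVec_eigenvectorBasis_eq_ofReal_smul (hH : H.IsHermitian) (i : n) :
    H *ᵥ ⇑(hH.eigenvectorBasis i) = (hH.eigenvalues i : ℂ) • ⇑(hH.eigenvectorBasis i) := by
  rw [hH.mulVec_eigenvectorBasis, Complex.coe_smul]

theorem cinner_eigenvectorBasis_mulVec (hH : H.IsHermitian) (i : n) (v : n → ℂ) :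
    cinner (hH.eigenvectorBasis i) (H *ᵥ v) = hH.eigenvalues i * cinner (hH.eigenvectorBasis i) v :=
  hH.cinner_mulVec_of_mulVec_eq_smul (hH.mulVec_eigenvectorBasis_eq_ofReal_smul i) v

theorem cinner_mulVec_self_eq_sum (hH : H.IsHermitian) (v : n → ℂ) :
    cinner v (H *ᵥ v) = ∑ i, (hH.eigenvalues i * ‖cinner (hH.eigenvectorBasis i) v‖ ^ 2 : ℝ) := by
  rw [cinner_eq_sum_orthonormalBasis hH.eigenvectorBasis]
  push_cast
  refine Finset.sum_congr rfl fun i _ => ?_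
  rw [hH.cinner_eigenvectorBasis_mulVec, mul_left_comm, Complex.conj_mul']

theorem ofReal_smul_sub_smul_one_mul_self (hH : H.IsHermitian) (s t : ℝ) :
    ((s : ℂ) • ((H - (t : ℂ) • 1) * (H - (t : ℂ) • 1))).IsHermitian := by
  have hP : (H - (t : ℂ) • 1)ᴴ = H - (t : ℂ) • 1 := by simp [hH.eq]
  rw [IsHermitian, conjTranspose_smul, conjTranspose_mul, hP, Complex.star_def,
    Complex.conj_ofReal]

theorem cinner_eigenvectorBasis_exp_mulVec (hH : H.IsHermitian) (s t : ℝ) (i : n) (v : n → ℂ) :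
    cinner (hH.eigenvectorBasis i)
        (NormedSpace.exp ((s : ℂ) • ((H - (t : ℂ) • 1) * (H - (t : ℂ) • 1))) *ᵥ v) =
      Real.exp (s * (hH.eigenvalues i - t) ^ 2) * cinner (hH.eigenvectorBasis i) v := by
  set e := ⇑(hH.eigenvectorBasis i)
  have hP : (H - (t : ℂ) • 1) *ᵥ e = ((hH.eigenvalues i - t : ℝ) : ℂ) • e := by
    rw [sub_mulVec, hH.mulVec_eigenvectorBasis_eq_ofReal_smul, smul_mulVec, one_mulVec,
      Complex.ofReal_sub, sub_smul]
  have hM : ((s : ℂ) • ((H - (t : ℂ) • 1) * (H - (t : ℂ) • 1))) *ᵥ e =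
      ((s * (hH.eigenvalues i - t) ^ 2 : ℝ) : ℂ) • e := by
    rw [smul_mulVec, ← mulVec_mulVec, hP, mulVec_smul, hP, smul_smul, smul_smul]
    push_cast
    ring_nf
  refine (hH.ofReal_smul_sub_smul_one_mul_self s t).exp.cinner_mulVec_of_mulVec_eq_smul ?_ v
  rw [exp_mulVec_of_mulVec_eq_smul hM, Complex.ofReal_exp]

theorem norm_cinner_eigenvectorBasis_exp_mulVec_sq (hH : H.IsHermitian) (s t : ℝ) (i : n)
    (v : n → ℂ) :
    ‖cinner (hH.eigenvectorBasis i)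
        (NormedSpace.exp ((s : ℂ) • ((H - (t : ℂ) • 1) * (H - (t : ℂ) • 1))) *ᵥ v)‖ ^ 2 =
      Real.exp (2 * s * (hH.eigenvalues i - t) ^ 2) * ‖cinner (hH.eigenvectorBasis i) v‖ ^ 2 := by
  rw [hH.cinner_eigenvectorBasis_exp_mulVec, norm_mul, mul_pow, Complex.norm_real,
    Real.norm_eq_abs, sq_abs, sq, ← Real.exp_add]
  ring_nf

theorem cinner_eigenvectorBasis_self (hH : H.IsHermitian) (i : n) :
    cinner (hH.eigenvectorBasis i) (hH.eigenvectorBasis i) = 1 := by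
  rw [cinner_eq_inner, WithLp.toLp_ofLp, inner_self_eq_norm_sq_to_K,
    hH.eigenvectorBasis.orthonormal.1 i]
  simp

theorem cinner_eigenvectorBasis_eq_zero_of_eigenvalues_ne (hH : H.IsHermitian) {Ψ : n → ℂ}
    {E₀ : ℝ} (hΨ : H *ᵥ Ψ = (E₀ : ℂ) • Ψ) {i : n} (hi : hH.eigenvalues i ≠ E₀) :
    cinner (hH.eigenvectorBasis i) Ψ = 0 := by
  have h := hH.cinner_eigenvectorBasis_mulVec i Ψ
  rw [hΨ, cinner_smul_right] at h
  exact (mul_eq_mul_right_iff.1 h).resolve_left (by exact_mod_cast hi.symm)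

theorem le_eigenvalues_of_cinner_eq_zero (hH : H.IsHermitian) {Ψ : n → ℂ} {E : ℝ}
    (hgap : ∀ v, cinner Ψ v = 0 → E * (cinner v v).re ≤ (cinner v (H *ᵥ v)).re) {i : n}
    (hi : cinner (hH.eigenvectorBasis i) Ψ = 0) : E ≤ hH.eigenvalues i := by
  have h := hgap (hH.eigenvectorBasis i) (by rw [← conj_cinner, hi, map_zero])
  rwa [hH.cinner_eigenvectorBasis_mulVec, hH.cinner_eigenvectorBasis_self, mul_one,
    Complex.one_re, mul_one, Complex.ofReal_re] at h

end IsHermitian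

end Matrix

theorem norm_sum_conj_mul_sq_le {ι : Type*} [Fintype ι] (y x : ι → ℂ) (s : Finset ι)
    (hy : ∀ i ∉ s, y i = 0) :
    ‖∑ i, conj (y i) * x i‖ ^ 2 ≤ (∑ i, ‖y i‖ ^ 2) * ∑ i ∈ s, ‖x i‖ ^ 2 := by
  have hsum : ∑ i, conj (y i) * x i = ∑ i ∈ s, conj (y i) * x i :=
    (Finset.sum_subset (Finset.subset_univ s) fun i _ hi => by simp [hy i hi]).symm
  calc ‖∑ i, conj (y i) * x i‖ ^ 2 ≤ (∑ i ∈ s, ‖y i‖ * ‖x i‖) ^ 2 := by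
        rw [hsum]
        gcongr
        exact (norm_sum_le _ _).trans_eq (by simp)
    _ ≤ (∑ i ∈ s, ‖y i‖ ^ 2) * ∑ i ∈ s, ‖x i‖ ^ 2 := Finset.sum_mul_sq_le_sq_mul_sq _ _ _
    _ ≤ (∑ i, ‖y i‖ ^ 2) * ∑ i ∈ s, ‖x i‖ ^ 2 := by
        gcongr ?_ * _
        exact Finset.sum_le_sum_of_subset_of_nonneg (Finset.subset_univ s)
          fun i _ _ => by positivity

theorem sum_mul_div_sum_le_of_ground_weight {ι : Type*} [Fintype ι] (p μ : ι → ℝ) (g : ℝ → ℝ)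
    {E₀ δ κ : ℝ} (hp : ∀ i, 0 ≤ p i) (hp1 : ∑ i, p i ≤ 1) (hg : ∀ x, 0 < g x) (hδ : 0 ≤ δ)
    (hκ : 0 < κ) (hground : κ ≤ ∑ i ∈ Finset.univ.filter (μ · = E₀), p i)
    (hexcited : ∀ i, μ i ≠ E₀ → g (μ i) * (μ i - E₀) ≤ κ * δ * g E₀) :
    (∑ i, μ i * (g (μ i) * p i)) / ∑ i, g (μ i) * p i ≤ E₀ + δ := by
  have hpos : 0 < ∑ i, g (μ i) * p i :=
    calc 0 < g E₀ * κ := mul_pos (hg _) hκ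
      _ ≤ g E₀ * ∑ i ∈ Finset.univ.filter (μ · = E₀), p i := by gcongr; exact (hg _).le
      _ = ∑ i ∈ Finset.univ.filter (μ · = E₀), g (μ i) * p i := by
          rw [Finset.mul_sum]
          exact Finset.sum_congr rfl fun i hi => by rw [(Finset.mem_filter.1 hi).2]
      _ ≤ ∑ i, g (μ i) * p i := Finset.sum_le_sum_of_subset_of_nonneg (Finset.filter_subset _ _)
            fun i _ _ => mul_nonneg (hg _).le (hp i)
  have hterm : ∀ i, (μ i - E₀ - δ) * (g (μ i) * p i) ≤
      δ * g E₀ * (κ * p i - if μ i = E₀ then p i else 0) := by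
    intro i
    have := mul_nonneg (mul_nonneg hδ (hg E₀).le) (mul_nonneg hκ.le (hp i))
    split_ifs with h
    · rw [h]; nlinarith
    · nlinarith [mul_le_mul_of_nonneg_right (hexcited i h) (hp i),
        mul_nonneg (mul_nonneg hδ (hg (μ i)).le) (hp i)]
  rw [div_le_iff₀ hpos, ← sub_nonpos]
  calc ∑ i, μ i * (g (μ i) * p i) - (E₀ + δ) * ∑ i, g (μ i) * p i
      = ∑ i, (μ i - E₀ - δ) * (g (μ i) * p i) := by
        rw [Finset.mul_sum, ← Finset.sum_sub_distrib]
        exact Finset.sum_congr rfl fun i _ => by ring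
    _ ≤ ∑ i, δ * g E₀ * (κ * p i - if μ i = E₀ then p i else 0) :=
        Finset.sum_le_sum fun i _ => hterm i
    _ = δ * g E₀ * (κ * ∑ i, p i - ∑ i ∈ Finset.univ.filter (μ · = E₀), p i) := by
        rw [← Finset.mul_sum, Finset.sum_sub_distrib, ← Finset.mul_sum, Finset.sum_filter]
    _ ≤ 0 := mul_nonpos_of_nonneg_of_nonpos (mul_nonneg hδ (hg E₀).le) (by nlinarith)

namespace Real

theorem mul_exp_neg_mul_le {c u : ℝ} (hc : 1 ≤ c) (hu : 1 ≤ u) : u * exp (-(c * u)) ≤ exp (-c) := by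
  have hu_le : u ≤ exp (c * (u - 1)) := by nlinarith [add_one_le_exp (c * (u - 1))]
  calc u * exp (-(c * u)) ≤ exp (c * (u - 1)) * exp (-(c * u)) := by gcongr
    _ = exp (-c) := by rw [← exp_add]; ring_nf

theorem exp_neg_logb_two_one_div_le {η : ℝ} (hη0 : 0 < η) (hη1 : η ≤ 1) :
    exp (-logb 2 (1 / η)) ≤ η := by
  have hlog : 0 ≤ log (1 / η) := log_nonneg (by rw [le_div_iff₀ hη0]; simpa using hη1)
  have hlog_le : log (1 / η) ≤ logb 2 (1 / η) := by
    rw [logb, le_div_iff₀ (log_pos one_lt_two)]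
    nlinarith [log_two_lt_d9]
  calc exp (-logb 2 (1 / η)) ≤ exp (-log (1 / η)) := by gcongr
    _ = η := by rw [one_div, log_inv, neg_neg, exp_log hη0]

theorem half_sub_two_le_sub_two_sqrt {q : ℝ} (hq : 0 ≤ q) : q / 2 - 2 ≤ q - 2 * √q := by
  nlinarith [sq_nonneg (√q - 2), sq_sqrt hq]

theorem exp_neg_ten_lt : exp (-10) < 361 / 40000 := by
  have h : (2 : ℝ) ^ 10 ≤ exp 10 := by
    rw [show (10 : ℝ) = (10 : ℕ) * 1 by norm_num, exp_nat_mul]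
    gcongr
    linarith [add_one_le_exp (1 : ℝ)]
  rw [exp_neg, inv_lt_comm₀ (exp_pos _) (by norm_num)]
  linarith

end Real

open Real in
theorem exp_gaussian_mul_sub_le {ε' q ε₀ E₀ μ : ℝ} (hε' : 0 < ε') (hq : 1 ≤ q - 2 * √q)
    (hε₀ : ε₀ - E₀ ≤ ε' / √q) (hμ : E₀ + ε' ≤ μ) :
    exp (-(q / ε' ^ 2) * (μ - ε₀) ^ 2) * (μ - E₀) ≤
      ε' * exp (-(q - 2 * √q)) * exp (-(q / ε' ^ 2) * (E₀ - ε₀) ^ 2) := by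
  have hq0 : 0 < q := by nlinarith [sqrt_nonneg q]
  have hsq : 0 < √q := sqrt_pos.2 hq0
  set u := (μ - E₀) / ε'
  have hu : 1 ≤ u := by rw [le_div_iff₀ hε']; linarith
  have ht : μ - E₀ = ε' * u := (mul_div_cancel₀ _ hε'.ne').symm
  have hd : √q * (ε₀ - E₀) ≤ ε' := by rwa [le_div_iff₀ hsq, mul_comm] at hε₀
  -- `(μ-ε₀)² - (E₀-ε₀)² = (μ-E₀)(μ-E₀-2(ε₀-E₀))`; the offset `ε₀-E₀ ≤ ε'/√q` costs at most `2√q u`.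
  have hexponent : (q - 2 * √q) * u ≤ q / ε' ^ 2 * ((μ - E₀) * ((μ - E₀) - 2 * (ε₀ - E₀))) := by
    have hsplit : q / ε' ^ 2 * ((μ - E₀) * ((μ - E₀) - 2 * (ε₀ - E₀))) =
        q * u ^ 2 - 2 * u * √q * (√q * (ε₀ - E₀) / ε') := by
      rw [ht]
      field_simp
      linear_combination (2 * (ε₀ - E₀)) * sq_sqrt hq0.le
    have hratio : √q * (ε₀ - E₀) / ε' ≤ 1 := by rwa [div_le_one hε']
    rw [hsplit]
    nlinarith [mul_le_mul_of_nonneg_left hratio (by positivity : 0 ≤ 2 * u * √q),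
      mul_nonneg hq0.le (mul_nonneg (by linarith : 0 ≤ u) (by linarith : 0 ≤ u - 1))]
  calc exp (-(q / ε' ^ 2) * (μ - ε₀) ^ 2) * (μ - E₀)
      = ε' * (u * exp (-(q / ε' ^ 2 * ((μ - E₀) * ((μ - E₀) - 2 * (ε₀ - E₀)))))) *
          exp (-(q / ε' ^ 2) * (E₀ - ε₀) ^ 2) := by
        have hsq_split : -(q / ε' ^ 2) * (μ - ε₀) ^ 2 =
            -(q / ε' ^ 2 * ((μ - E₀) * ((μ - E₀) - 2 * (ε₀ - E₀)))) +
              -(q / ε' ^ 2) * (E₀ - ε₀) ^ 2 := by ring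
        rw [hsq_split, exp_add, ht]
        ring
    _ ≤ ε' * (u * exp (-((q - 2 * √q) * u))) * exp (-(q / ε' ^ 2) * (E₀ - ε₀) ^ 2) := by
        gcongr
    _ ≤ ε' * exp (-(q - 2 * √q)) * exp (-(q / ε' ^ 2) * (E₀ - ε₀) ^ 2) := by
        gcongr
        exact mul_exp_neg_mul_le hq hu

open Real in
theorem exp_gaussian_mul_sub_le_of_logb {ε' η q ε₀ E₀ μ : ℝ} (hε' : 0 < ε') (hη0 : 0 < η)
    (hη1 : η ≤ 1) (hq : q = 4 * logb 2 (1 / η) + 24) (hε₀ : |ε₀ - E₀| ≤ ε' / √q)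
    (hμ : E₀ + ε' ≤ μ) :
    exp (-(q / ε' ^ 2) * (μ - ε₀) ^ 2) * (μ - E₀) ≤
      361 / 400 * (η * ε' / 100) * exp (-(q / ε' ^ 2) * (E₀ - ε₀) ^ 2) := by
  have hL : 0 ≤ logb 2 (1 / η) := logb_nonneg one_lt_two (by rw [le_div_iff₀ hη0]; simpa using hη1)
  have hc : logb 2 (1 / η) + 10 ≤ q - 2 * √q := by
    linarith [half_sub_two_le_sub_two_sqrt (q := q) (by linarith)]
  have hexp : exp (-(q - 2 * √q)) ≤ 361 / 40000 * η :=
    calc exp (-(q - 2 * √q)) ≤ exp (-logb 2 (1 / η)) * exp (-10) := by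
          rw [← exp_add]; gcongr; linarith
      _ ≤ η * (361 / 40000) := by
          gcongr
          exacts [exp_neg_logb_two_one_div_le hη0 hη1, exp_neg_ten_lt.le]
      _ = 361 / 40000 * η := mul_comm _ _
  calc exp (-(q / ε' ^ 2) * (μ - ε₀) ^ 2) * (μ - E₀)
      ≤ ε' * exp (-(q - 2 * √q)) * exp (-(q / ε' ^ 2) * (E₀ - ε₀) ^ 2) :=
        exp_gaussian_mul_sub_le hε' (by linarith) (abs_le.1 hε₀).2 hμ
    _ ≤ ε' * (361 / 40000 * η) * exp (-(q / ε' ^ 2) * (E₀ - ε₀) ^ 2) := by gcongr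
    _ = 361 / 400 * (η * ε' / 100) * exp (-(q / ε' ^ 2) * (E₀ - ε₀) ^ 2) := by ring

theorem gaussian_filter_energy {N : ℕ}
    (H : Matrix (Fin N) (Fin N) ℂ) (hH : H.IsHermitian)
    (lam0 : ℝ) (Ψ0 : Fin N → ℂ) (hΨ0unit : cinner Ψ0 Ψ0 = 1)
    (hground : H.mulVec Ψ0 = (lam0 : ℂ) • Ψ0)
    (ε' : ℝ) (hε' : 0 < ε')
    (hgap : ∀ v : Fin N → ℂ, cinner Ψ0 v = 0 →
      (lam0 + ε') * (cinner v v).re ≤ (cinner v (H.mulVec v)).re)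
    (η : ℝ) (hη0 : 0 < η) (hη1 : η ≤ 1)
    (q : ℝ) (hq : q = 4 * Real.logb 2 (1 / η) + 24)
    (ε₀ : ℝ) (hε₀ : |ε₀ - lam0| ≤ ε' / Real.sqrt q)
    (Φ' : Fin N → ℂ) (hΦ'unit : cinner Φ' Φ' = 1)
    (hov : 19 / 20 ≤ ‖cinner Ψ0 Φ'‖) :
    letI A : Matrix (Fin N) (Fin N) ℂ :=
      NormedSpace.exp ((-((q : ℂ) / (2 * (ε' : ℂ) ^ 2))) •
        ((H - (ε₀ : ℂ) • 1) * (H - (ε₀ : ℂ) • 1)))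
    letI φ : Fin N → ℂ := (evnorm (A.mulVec Φ'))⁻¹ • A.mulVec Φ'
    (cinner φ (H.mulVec φ)).re ≤ lam0 + η * ε' / 100 := by
  have hscalar : -((q : ℂ) / (2 * (ε' : ℂ) ^ 2)) = ((-(q / (2 * ε' ^ 2)) : ℝ) : ℂ) := by
    push_cast; rfl
  have hexponent : 2 * -(q / (2 * ε' ^ 2)) = -(q / ε' ^ 2) := by field_simp
  rw [hscalar, re_cinner_inv_evnorm_smul, hH.cinner_mulVec_self_eq_sum,
    cinner_self_eq_sum_orthonormalBasis hH.eigenvectorBasis, Complex.ofReal_re, Complex.ofReal_re]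
  simp only [hH.norm_cinner_eigenvectorBasis_exp_mulVec_sq, hexponent]
  set b := hH.eigenvectorBasis
  set μ := hH.eigenvalues
  have hΦ'sum : ∑ i, ‖cinner (b i) Φ'‖ ^ 2 = 1 := by
    exact_mod_cast (cinner_self_eq_sum_orthonormalBasis b Φ').symm.trans hΦ'unit
  have hΨ0sum : ∑ i, ‖cinner (b i) Ψ0‖ ^ 2 = 1 := by
    exact_mod_cast (cinner_self_eq_sum_orthonormalBasis b Ψ0).symm.trans hΨ0unit
  have hground_weight :
      361 / 400 ≤ ∑ i ∈ Finset.univ.filter (μ · = lam0), ‖cinner (b i) Φ'‖ ^ 2 := by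
    have h := norm_sum_conj_mul_sq_le (fun i => cinner (b i) Ψ0) (fun i => cinner (b i) Φ')
      (Finset.univ.filter (μ · = lam0)) fun i hi =>
        hH.cinner_eigenvectorBasis_eq_zero_of_eigenvalues_ne hground (by simpa using hi)
    rw [← cinner_eq_sum_orthonormalBasis, hΨ0sum, one_mul] at h
    nlinarith [norm_nonneg (cinner Ψ0 Φ')]
  refine sum_mul_div_sum_le_of_ground_weight (δ := η * ε' / 100) _ μ
    (fun x => Real.exp (-(q / ε' ^ 2) * (x - ε₀) ^ 2)) (fun i => sq_nonneg _) hΦ'sum.le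
    (fun x => Real.exp_pos _) (by positivity) (by norm_num) hground_weight fun i hi => ?_
  exact exp_gaussian_mul_sub_le_of_logb hε' hη0 hη1 hq hε₀ <|
    hH.le_eigenvalues_of_cinner_eq_zero hgap <|
      hH.cinner_eigenvectorBasis_eq_zero_of_eigenvalues_ne hground hi
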